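/- Exponential mechanism satisfies ε-LDP: let X be an input domain, let R be a nonempty finite output domain, let u : X × R → ℝ be a utility function, and let Δu = sup_{r ∈ R} sup_{x, x' ∈ X} |u(x, r) − u(x', r)| be its sensitivity, assumed finite and positive. For ε > 0, the mechanism M_E that on input x outputs r ∈ R with probability proportional to exp(ε·u(x, r)/(2·Δu)) satisfies ε-LDP. -/
import Mathlib


open MeasureTheory

/-- The exponential mechanism on a finite output domain `R` with utility function `u`
and sensitivity bound `Δu`: on input `x` it outputs `r` with probability proportional to
`exp(ε·u(x,r)/(2·Δu))`. -/
noncomputable def expMechanism {X R : Type*} [Fintype R] [MeasurableSpace R]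
    (ε Δu : ℝ) (u : X → R → ℝ) (x : X) : Measure R :=
  Measure.sum fun r : R =>
    ENNReal.ofReal
      (Real.exp (ε * u x r / (2 * Δu)) /
        ∑ r' : R, Real.exp (ε * u x r' / (2 * Δu))) • Measure.dirac r

/-- The exponential mechanism satisfies `ε`-LDP: let `R` be a nonempty finite output
domain, `u : X × R → ℝ` a utility function whose sensitivity
`Δu = sup_{r} sup_{x,x'} |u(x,r) − u(x',r)|` is finite and positive. For `ε > 0`, for
every pair of inputs `x, x'` and every output set `S`,
`Pr[M_E(x) ∈ S] ≤ e^ε · Pr[M_E(x') ∈ S]`. -/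
theorem exponential_mechanism_satisfies_LDP {X R : Type*} [Fintype R] [Nonempty R]
    [MeasurableSpace R] [MeasurableSingletonClass R]
    (u : X → R → ℝ) (Δu : ℝ) (hΔu : 0 < Δu)
    (hsens : ∀ r : R, ∀ x x' : X, |u x r - u x' r| ≤ Δu)
    (ε : ℝ) (hε : 0 < ε) :
    ∀ x x' : X, ∀ S : Set R, MeasurableSet S →
      expMechanism ε Δu u x S ≤ ENNReal.ofReal (Real.exp ε) * expMechanism ε Δu u x' S := by
  intro x x' S hS
  have key : ∀ (x x' : X) (r : R),
      Real.exp (ε * u x r / (2 * Δu)) ≤ Real.exp (ε / 2) * Real.exp (ε * u x' r / (2 * Δu)) := by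
    intro x x' r
    rw [← Real.exp_add]
    apply Real.exp_le_exp.mpr
    have h1 : u x r - u x' r ≤ Δu := (abs_le.mp (hsens r x x')).2
    have h2 : ε * u x r / (2 * Δu) - ε * u x' r / (2 * Δu) ≤ ε / 2 := by
      rw [div_sub_div_same, ← mul_sub, div_le_iff₀ (by positivity)]
      nlinarith
    linarith
  have Zpos : ∀ y : X, 0 < ∑ r' : R, Real.exp (ε * u y r' / (2 * Δu)) := fun y =>
    Finset.sum_pos (fun r _ => Real.exp_pos _) Finset.univ_nonempty
  have hZ : (∑ r' : R, Real.exp (ε * u x' r' / (2 * Δu)))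
      ≤ Real.exp (ε / 2) * ∑ r' : R, Real.exp (ε * u x r' / (2 * Δu)) := by
    rw [Finset.mul_sum]
    exact Finset.sum_le_sum fun r _ => key x' x r
  have hw : ∀ r : R,
      Real.exp (ε * u x r / (2 * Δu)) / (∑ r' : R, Real.exp (ε * u x r' / (2 * Δu)))
      ≤ Real.exp ε *
        (Real.exp (ε * u x' r / (2 * Δu)) / ∑ r' : R, Real.exp (ε * u x' r' / (2 * Δu))) := by
    intro r
    have h1 := key x x' r
    have pZ := Zpos x
    have pZ' := Zpos x'
    have hexp : Real.exp ε = Real.exp (ε / 2) * Real.exp (ε / 2) := by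
      rw [← Real.exp_add]; ring_nf
    have hb := (Real.exp_pos (ε * u x' r / (2 * Δu)))
    have he := Real.exp_pos (ε / 2)
    rw [mul_div_assoc'] at *
    rw [div_le_div_iff₀ pZ pZ']
    calc Real.exp (ε * u x r / (2 * Δu)) * ∑ r' : R, Real.exp (ε * u x' r' / (2 * Δu))
        ≤ (Real.exp (ε / 2) * Real.exp (ε * u x' r / (2 * Δu))) *
          (Real.exp (ε / 2) * ∑ r' : R, Real.exp (ε * u x r' / (2 * Δu))) :=
          mul_le_mul h1 hZ pZ'.le (mul_pos he hb).le
      _ = Real.exp ε * Real.exp (ε * u x' r / (2 * Δu)) *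
          ∑ r' : R, Real.exp (ε * u x r' / (2 * Δu)) := by rw [hexp]; ring
  simp only [expMechanism, Measure.sum_apply _ hS, Measure.smul_apply, smul_eq_mul]
  calc ∑' r : R, ENNReal.ofReal (Real.exp (ε * u x r / (2 * Δu)) /
          ∑ r' : R, Real.exp (ε * u x r' / (2 * Δu))) * (Measure.dirac r) S
      ≤ ∑' r : R, ENNReal.ofReal (Real.exp ε) *
          (ENNReal.ofReal (Real.exp (ε * u x' r / (2 * Δu)) /
            ∑ r' : R, Real.exp (ε * u x' r' / (2 * Δu))) * (Measure.dirac r) S) := by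
        refine ENNReal.tsum_le_tsum fun r => ?_
        rw [← mul_assoc, ← ENNReal.ofReal_mul (Real.exp_pos ε).le]
        exact mul_le_mul_left (ENNReal.ofReal_le_ofReal (hw r)) _
    _ = ENNReal.ofReal (Real.exp ε) * ∑' r : R, ENNReal.ofReal
          (Real.exp (ε * u x' r / (2 * Δu)) /
            ∑ r' : R, Real.exp (ε * u x' r' / (2 * Δu))) * (Measure.dirac r) S := by
        rw [ENNReal.tsum_mul_left]
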